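/- The ideal Λ = Λ₀ + Λ₁ + Λ₂ is contained in I(X), the defining ideal of the special fiber ring F(I); that is, every generator of Λ lies in the kernel of φ_W. -/

import Mathlib

open MvPolynomial

/-! Setup following "Rees algebras of ideals submaximally generated by quadrics".
`R = K[x_1, …, x_d]`, `I = (x_i x_j (i ≠ j), x_k^2 - x_d^2 (k ≠ d))`,
`W = K[w_{ij} : 1 ≤ i ≤ j ≤ d, (i,j) ≠ (d,d)]` with `w_{ij} = w_{ji}`, `w_{dd} = 0`,
`φ_W : W → R`, `w_{ij} ↦ g_{ij}`, `I(X) = ker φ_W`, and the candidate ideal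
`Λ = Λ₀ + Λ₁ + Λ₂` built from 2×2 minors of the symmetric matrix `M = (w_{ij})`. -/

/-- 1-based index set `{1, …, d}`. -/
abbrev Idx (d : ℕ) : Type := (Set.Icc 1 d : Set ℕ)

/-- Index set for the variables `w_{ij}`, `1 ≤ i ≤ j ≤ d`, `(i,j) ≠ (d,d)`. -/
abbrev SymIdx (d : ℕ) : Type :=
  {p : Idx d × Idx d // p.1 ≤ p.2 ∧ ¬(p.1.1 = d ∧ p.2.1 = d)}

/-- The entry `w_{ij}` of `M` as an element of `W`, with the conventions
`w_{ij} = w_{ji}` and `w_{dd} = 0`. -/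
noncomputable def wv (K : Type*) [Field K] (d : ℕ) (i j : Idx d) :
    MvPolynomial (SymIdx d) K :=
  if h : (min i j).1 = d ∧ (max i j).1 = d then 0
  else X (⟨(min i j, max i j), ⟨min_le_max, h⟩⟩ : SymIdx d)

/-- The last variable `x_d` of `R = K[x_1, …, x_d]`. -/
noncomputable def xd (K : Type*) [Field K] (d : ℕ) : MvPolynomial (Idx d) K :=
  if h : 1 ≤ d then X (⟨d, Set.mem_Icc.mpr ⟨h, le_rfl⟩⟩ : Idx d) else 0

/-- The quadrics `g_{ij} = x_i x_j` (for `i ≠ j`) and `g_{ii} = x_i ^ 2 - x_d ^ 2`. -/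
noncomputable def gq (K : Type*) [Field K] (d : ℕ) (i j : Idx d) : MvPolynomial (Idx d) K :=
  if i = j then X i ^ 2 - xd K d ^ 2 else X i * X j

/-- The `K`-algebra map `φ_W : W → R`, `w_{ij} ↦ g_{ij}`. -/
noncomputable def phiW (K : Type*) [Field K] (d : ℕ) :
    MvPolynomial (SymIdx d) K →ₐ[K] MvPolynomial (Idx d) K :=
  aeval (fun p : SymIdx d => gq K d p.1.1 p.1.2)

/-- `I(X) = ker φ_W`, the defining ideal of the special fiber ring `F(I)`. -/
noncomputable def IX (K : Type*) [Field K] (d : ℕ) : Ideal (MvPolynomial (SymIdx d) K) :=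
  RingHom.ker (phiW K d).toRingHom

/-- A `2 × 2` submatrix of the symmetric matrix `M = (w_{ij})`, recorded by its (ordered)
rows `r1 < r2` and columns `c1 < c2`. -/
structure Sub2 (d : ℕ) where
  r1 : Idx d
  r2 : Idx d
  c1 : Idx d
  c2 : Idx d
  hr : r1 < r2
  hc : c1 < c2

/-- The determinant of a `2 × 2` submatrix of `M`, i.e. the minor `[r1 r2 | c1 c2]`. -/
noncomputable def sdet (K : Type*) [Field K] (d : ℕ) (m : Sub2 d) :
    MvPolynomial (SymIdx d) K :=
  wv K d m.r1 m.c1 * wv K d m.r2 m.c2 - wv K d m.r1 m.c2 * wv K d m.r2 m.c1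

/-- The set of row indices of a `2 × 2` submatrix. -/
def Sub2.rows {d : ℕ} (m : Sub2 d) : Finset (Idx d) := {m.r1, m.r2}

/-- The set of column indices of a `2 × 2` submatrix. -/
def Sub2.cols {d : ℕ} (m : Sub2 d) : Finset (Idx d) := {m.c1, m.c2}

/-- `inA s m` says that the minor `det m` belongs to `A_s`: the row and column index
sets of `m` meet in exactly `s` indices (equivalently, `m` contains exactly `s`
diagonal entries of `M`). -/
def inA {d : ℕ} (s : ℕ) (m : Sub2 d) : Prop := (m.rows ∩ m.cols).card = s

/-- Two `2 × 2` submatrices of `M` are complementary: there is a `4 × 4` principal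
submatrix (with index set `S`, `|S| = 4`) containing both, in which they share no rows
and no columns. -/
def ComplSub2 {d : ℕ} (m n : Sub2 d) : Prop :=
  ∃ S : Finset (Idx d), S.card = 4 ∧ m.rows ∪ n.rows ⊆ S ∧ m.cols ∪ n.cols ⊆ S ∧
    Disjoint m.rows n.rows ∧ Disjoint m.cols n.cols

/-- `δ(m) = 0` if the diagonal entry of `M` appearing in `m` lies on the diagonal of `m`,
and `δ(m) = 1` if it lies on the antidiagonal (intended for minors in `A₁`). -/
def delta {d : ℕ} (m : Sub2 d) : ℕ := if m.r1 = m.c1 ∨ m.r2 = m.c2 then 0 else 1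

/-- `Λ₀`: the ideal generated by the minors in `A₀`. -/
noncomputable def Lam0 (K : Type*) [Field K] (d : ℕ) : Ideal (MvPolynomial (SymIdx d) K) :=
  Ideal.span {f | ∃ m : Sub2 d, inA 0 m ∧ f = sdet K d m}

/-- `Λ₁`: generated by `det m - (-1)^(δ m + δ n) * det n` over complementary pairs in `A₁`. -/
noncomputable def Lam1 (K : Type*) [Field K] (d : ℕ) : Ideal (MvPolynomial (SymIdx d) K) :=
  Ideal.span {f | ∃ m n : Sub2 d, inA 1 m ∧ inA 1 n ∧ ComplSub2 m n ∧
    f = sdet K d m - (-1 : MvPolynomial (SymIdx d) K) ^ (delta m + delta n) * sdet K d n}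

/-- `Λ₂`: generated by `(det m1 + det n1) - (det m2 + det n2)` over pairs of complementary
matrices (PCMs), all four lying in a common `4 × 4` principal submatrix. -/
noncomputable def Lam2 (K : Type*) [Field K] (d : ℕ) : Ideal (MvPolynomial (SymIdx d) K) :=
  Ideal.span {f | ∃ m1 n1 m2 n2 : Sub2 d, inA 2 m1 ∧ inA 2 n1 ∧ inA 2 m2 ∧ inA 2 n2 ∧
    ComplSub2 m1 n1 ∧ ComplSub2 m2 n2 ∧
    (∃ S : Finset (Idx d), S.card = 4 ∧
      m1.rows ∪ m1.cols ∪ n1.rows ∪ n1.cols ∪ m2.rows ∪ m2.cols ∪ n2.rows ∪ n2.cols ⊆ S) ∧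
    f = (sdet K d m1 + sdet K d n1) - (sdet K d m2 + sdet K d n2)}

/-- The candidate ideal `Λ = Λ₀ + Λ₁ + Λ₂`. -/
noncomputable def Lam (K : Type*) [Field K] (d : ℕ) : Ideal (MvPolynomial (SymIdx d) K) :=
  Lam0 K d + Lam1 K d + Lam2 K d

/-- The Hilbert function of an ideal `N ⊆ W` in degree `i`:
the `K`-dimension of the degree-`i` homogeneous component of `N`. -/
noncomputable def HFI (K : Type*) [Field K] (d : ℕ)
    (N : Ideal (MvPolynomial (SymIdx d) K)) (i : ℕ) : ℕ :=
  Module.finrank K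
    ↥(Submodule.restrictScalars K N ⊓ homogeneousSubmodule (SymIdx d) K i)

/-!
Under `φ_W` the entry `w_{ij}` goes to `x_i x_j - [i = j] x_d²`. A minor of `A₀` therefore maps
to `x_{r₁}x_{c₁}x_{r₂}x_{c₂} - x_{r₁}x_{c₂}x_{r₂}x_{c₁} = 0`. A minor of `A₁` maps to
`∓ x_d² x_p x_q`, where `p` is its row outside its columns and `q` its column outside its rows;
two complementary minors partition the index set of their `4 × 4` principal submatrix both by rows
and by columns, so they exchange `p` and `q` and have the same image up to the sign `(-1)^δ`.
A minor of `A₂` on the rows `{a, b}` maps to `x_d⁴ - x_d²(x_a² + x_b²)`, so the image of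
`det m + det n` for a complementary pair depends only on the common index set of the `4 × 4`
principal submatrix, which is the same for both pairs of a PCM.
-/

namespace Finset

variable {α : Type*} [DecidableEq α]

lemma pair_erase_left {a b : α} (h : a ≠ b) : ({a, b} : Finset α).erase a = {b} :=
  erase_insert (by simpa using h)

lemma pair_erase_right {a b : α} (h : a ≠ b) : ({a, b} : Finset α).erase b = {a} := by
  rw [pair_comm, pair_erase_left h.symm]

lemma union_eq_of_disjoint_of_card_le {s t u : Finset α} (hsub : s ∪ t ⊆ u) (hd : Disjoint s t)
    (hcard : #u ≤ #s + #t) : s ∪ t = u :=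
  eq_of_subset_of_card_le hsub (by rwa [card_union_of_disjoint hd])

end Finset

section

variable {K : Type*} [Field K] {d : ℕ}

lemma xd_eq_X (i : Idx d) (hi : i.1 = d) : xd K d = X i := by
  obtain ⟨i, hi1, hid⟩ := i
  obtain rfl : i = d := hi
  simp [xd, hi1]

lemma wv_comm (i j : Idx d) : wv K d i j = wv K d j i := by
  simp only [wv, min_comm i j, max_comm i j]

lemma phiW_wv_of_le {i j : Idx d} (hij : i ≤ j) :
    phiW K d (wv K d i j) = X i * X j - if i = j then xd K d ^ 2 else 0 := by
  simp only [wv, min_eq_left hij, max_eq_right hij]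
  split_ifs with hd hi hi'
  · subst hi
    rw [xd_eq_X i hd.1, map_zero]
    ring
  · exact absurd (Subtype.ext (hd.1.trans hd.2.symm)) hi
  · subst hi'
    simp [phiW, gq, sq]
  · simp [phiW, gq, hi']

lemma phiW_wv (i j : Idx d) :
    phiW K d (wv K d i j) = X i * X j - if i = j then xd K d ^ 2 else 0 := by
  rcases le_total i j with hij | hji
  · exact phiW_wv_of_le hij
  · simp only [wv_comm i j, phiW_wv_of_le hji, mul_comm, eq_comm]

lemma phiW_sdet (m : Sub2 d) :
    phiW K d (sdet K d m) =
      (X m.r1 * X m.c1 - (if m.r1 = m.c1 then xd K d ^ 2 else 0)) *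
      (X m.r2 * X m.c2 - (if m.r2 = m.c2 then xd K d ^ 2 else 0)) -
      (X m.r1 * X m.c2 - (if m.r1 = m.c2 then xd K d ^ 2 else 0)) *
      (X m.r2 * X m.c1 - (if m.r2 = m.c1 then xd K d ^ 2 else 0)) := by
  simp only [sdet, map_sub, map_mul, phiW_wv]

namespace Sub2

lemma card_rows (m : Sub2 d) : m.rows.card = 2 := Finset.card_pair m.hr.ne

lemma card_cols (m : Sub2 d) : m.cols.card = 2 := Finset.card_pair m.hc.ne

lemma mem_rows_inter_cols {m : Sub2 d} {x : Idx d} :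
    x ∈ m.rows ∩ m.cols ↔ (x = m.r1 ∨ x = m.r2) ∧ (x = m.c1 ∨ x = m.c2) := by
  simp [rows, cols]

lemma eq_of_inA_two {m : Sub2 d} (h : inA 2 m) : m.r1 = m.c1 ∧ m.r2 = m.c2 := by
  have hrows : m.rows ∩ m.cols = m.rows :=
    Finset.eq_of_subset_of_card_le Finset.inter_subset_left (by rw [h, card_rows])
  have h1 := mem_rows_inter_cols.mp (hrows ▸ (by simp [rows] : m.r1 ∈ m.rows))
  have h2 := mem_rows_inter_cols.mp (hrows ▸ (by simp [rows] : m.r2 ∈ m.rows))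
  have := m.hr
  have := m.hc
  grind

end Sub2

open Sub2

lemma phiW_sdet_of_inA_zero {m : Sub2 d} (h : inA 0 m) : phiW K d (sdet K d m) = 0 := by
  have hdisj : Disjoint m.rows m.cols :=
    Finset.disjoint_iff_inter_eq_empty.mpr (Finset.card_eq_zero.mp h)
  obtain ⟨⟨h11, h12⟩, h21, h22⟩ :
      (m.r1 ≠ m.c1 ∧ m.r1 ≠ m.c2) ∧ m.r2 ≠ m.c1 ∧ m.r2 ≠ m.c2 := by
    simpa [Finset.disjoint_iff_ne, rows, cols] using hdisj
  rw [phiW_sdet, if_neg h11, if_neg h12, if_neg h21, if_neg h22]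
  ring

lemma exists_phiW_sdet_of_inA_one {m : Sub2 d} (h : inA 1 m) :
    ∃ p q, m.rows \ m.cols = {p} ∧ m.cols \ m.rows = {q} ∧
      phiW K d (sdet K d m) = -(-1) ^ delta m * xd K d ^ 2 * (X p * X q) := by
  obtain ⟨i, hi⟩ := Finset.card_eq_one.mp h
  have hmem : ∀ x ∈ m.rows, x ∈ m.cols → x = i := fun x hr hc =>
    Finset.mem_singleton.mp (hi ▸ Finset.mem_inter.mpr ⟨hr, hc⟩)
  have hrows : m.rows \ m.cols = m.rows.erase i := by
    rw [← Finset.sdiff_inter_self_left, hi, Finset.sdiff_singleton_eq_erase]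
  have hcols : m.cols \ m.rows = m.cols.erase i := by
    rw [← Finset.sdiff_inter_self_left, Finset.inter_comm, hi, Finset.sdiff_singleton_eq_erase]
  obtain ⟨hir, hic⟩ := Finset.mem_inter.mp (hi ▸ Finset.mem_singleton_self i)
  have hr := m.hr.ne
  have hc := m.hc.ne
  rw [hrows, hcols, phiW_sdet, delta]
  simp only [rows, cols, Finset.mem_insert, Finset.mem_singleton] at hmem hir hic ⊢
  -- split on the position of the diagonal entry `w_ii` inside `m`
  rcases hir with rfl | rfl <;> rcases hic with h | h
  · have h22 : m.r2 ≠ m.c2 := fun e => hr (hmem _ (.inr rfl) (.inr e)).symm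
    refine ⟨m.r2, m.c2, Finset.pair_erase_left hr,
      by rw [h]; exact Finset.pair_erase_left hc, ?_⟩
    rw [if_pos h, if_neg h22, if_neg (h ▸ hc), if_neg (h ▸ hr.symm), if_pos (.inl h)]
    ring
  · have h21 : m.r2 ≠ m.c1 := fun e => hr (hmem _ (.inr rfl) (.inl e)).symm
    refine ⟨m.r2, m.c1, Finset.pair_erase_left hr,
      by rw [h]; exact Finset.pair_erase_right hc, ?_⟩
    rw [if_neg (h ▸ hc.symm), if_neg (h ▸ hr.symm), if_pos h, if_neg h21,
      if_neg (by rintro (e | e); exacts [hc (e.symm.trans h), hr (h.trans e.symm)])]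
    ring
  · have h12 : m.r1 ≠ m.c2 := fun e => hr (hmem _ (.inl rfl) (.inr e))
    refine ⟨m.r1, m.c2, Finset.pair_erase_right hr,
      by rw [h]; exact Finset.pair_erase_left hc, ?_⟩
    rw [if_neg (h ▸ hr), if_neg (h ▸ hc), if_neg h12, if_pos h,
      if_neg (by rintro (e | e); exacts [hr (e.trans h.symm), hc (h.symm.trans e)])]
    ring
  · have h11 : m.r1 ≠ m.c1 := fun e => hr (hmem _ (.inl rfl) (.inl e))
    refine ⟨m.r1, m.c1, Finset.pair_erase_right hr,
      by rw [h]; exact Finset.pair_erase_right hc, ?_⟩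
    rw [if_neg h11, if_pos h, if_neg (h ▸ hr), if_neg (h ▸ hc.symm), if_pos (.inr h)]
    ring

lemma phiW_sdet_of_inA_two {m : Sub2 d} (h : inA 2 m) :
    phiW K d (sdet K d m) = xd K d ^ 2 * xd K d ^ 2 - xd K d ^ 2 * ∑ i ∈ m.rows, X i ^ 2 := by
  obtain ⟨h1, h2⟩ := eq_of_inA_two h
  rw [phiW_sdet, if_pos h1, if_pos h2, if_neg (h1 ▸ m.hc.ne), if_neg (h1 ▸ m.hr.ne'), rows,
    Finset.sum_pair m.hr.ne, ← h1, ← h2]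
  ring

namespace ComplSub2

variable {m n : Sub2 d}

lemma symm (h : ComplSub2 m n) : ComplSub2 n m := by
  obtain ⟨S, hS, hr, hc, hdr, hdc⟩ := h
  exact ⟨S, hS, by rwa [Finset.union_comm], by rwa [Finset.union_comm], hdr.symm, hdc.symm⟩

lemma rows_union_eq (h : ComplSub2 m n) {S : Finset (Idx d)} (hS : S.card = 4)
    (hsub : m.rows ∪ n.rows ⊆ S) : m.rows ∪ n.rows = S := by
  obtain ⟨-, -, -, -, hdr, -⟩ := h
  exact Finset.union_eq_of_disjoint_of_card_le hsub hdr (by rw [hS, card_rows, card_rows])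

lemma rows_sdiff_cols (h : ComplSub2 m n) : n.rows \ n.cols = m.cols \ m.rows := by
  obtain ⟨S, hS, hr, hc, hdr, hdc⟩ := h
  have hR : n.rows = S \ m.rows := by
    rw [← Finset.union_eq_of_disjoint_of_card_le hr hdr (by rw [hS, card_rows, card_rows]),
      Finset.union_sdiff_cancel_left hdr]
  have hC : n.cols = S \ m.cols := by
    rw [← Finset.union_eq_of_disjoint_of_card_le hc hdc (by rw [hS, card_cols, card_cols]),
      Finset.union_sdiff_cancel_left hdc]
  rw [hR, hC, sdiff_sdiff_sdiff_cancel_left (Finset.union_subset_left hc)]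

end ComplSub2

lemma phiW_sdet_eq_of_compl_of_inA_one {m n : Sub2 d} (hm : inA 1 m) (hn : inA 1 n)
    (hmn : ComplSub2 m n) :
    phiW K d (sdet K d m) = (-1) ^ (delta m + delta n) * phiW K d (sdet K d n) := by
  obtain ⟨p, q, hp, hq, hφm⟩ := exists_phiW_sdet_of_inA_one (K := K) hm
  obtain ⟨p', q', hp', hq', hφn⟩ := exists_phiW_sdet_of_inA_one (K := K) hn
  have hpq : p' = q := Finset.singleton_inj.mp (hp'.symm.trans (hmn.rows_sdiff_cols.trans hq))
  have hqp : q' = p :=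
    Finset.singleton_inj.mp (hq'.symm.trans (hmn.symm.rows_sdiff_cols.symm.trans hp))
  have hsq : ((-1 : MvPolynomial (Idx d) K) ^ delta n) ^ 2 = 1 := by
    rw [← pow_mul, pow_mul', neg_one_sq, one_pow]
  rw [hφm, hφn, hpq, hqp]
  linear_combination ((-1) ^ delta m * xd K d ^ 2 * X p * X q) * hsq

lemma phiW_sdet_add_of_compl_of_inA_two {m n : Sub2 d} (hm : inA 2 m) (hn : inA 2 n)
    (hmn : ComplSub2 m n) :
    phiW K d (sdet K d m + sdet K d n) =
      2 * xd K d ^ 4 - xd K d ^ 2 * ∑ i ∈ m.rows ∪ n.rows, X i ^ 2 := by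
  obtain ⟨-, -, -, -, hdr, -⟩ := hmn
  rw [map_add, phiW_sdet_of_inA_two hm, phiW_sdet_of_inA_two hn, Finset.sum_union hdr]
  ring

lemma mem_IX {f : MvPolynomial (SymIdx d) K} : f ∈ IX K d ↔ phiW K d f = 0 := RingHom.mem_ker

lemma Lam0_le_IX : Lam0 K d ≤ IX K d := by
  rw [Lam0, Ideal.span_le]
  rintro f ⟨m, hm, rfl⟩
  exact mem_IX.mpr (phiW_sdet_of_inA_zero hm)

lemma Lam1_le_IX : Lam1 K d ≤ IX K d := by
  rw [Lam1, Ideal.span_le]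
  rintro f ⟨m, n, hm, hn, hmn, rfl⟩
  rw [SetLike.mem_coe, mem_IX, map_sub, map_mul, phiW_sdet_eq_of_compl_of_inA_one hm hn hmn]
  simp

lemma Lam2_le_IX : Lam2 K d ≤ IX K d := by
  rw [Lam2, Ideal.span_le]
  rintro f ⟨m1, n1, m2, n2, h1, h2, h3, h4, hc1, hc2, ⟨S, hS, hsub⟩, rfl⟩
  simp only [Finset.union_subset_iff] at hsub
  obtain ⟨⟨⟨⟨⟨⟨⟨hm1, -⟩, hn1⟩, -⟩, hm2⟩, -⟩, hn2⟩, -⟩ := hsub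
  rw [SetLike.mem_coe, mem_IX, map_sub, phiW_sdet_add_of_compl_of_inA_two h1 h2 hc1,
    phiW_sdet_add_of_compl_of_inA_two h3 h4 hc2,
    hc1.rows_union_eq hS (Finset.union_subset hm1 hn1),
    hc2.rows_union_eq hS (Finset.union_subset hm2 hn2), sub_self]

end

theorem candidate_le_fiber_ideal_general (K : Type*) [Field K] (d : ℕ) :
    Lam K d ≤ IX K d := by
  rw [Lam, Submodule.add_eq_sup, Submodule.add_eq_sup]
  exact sup_le (sup_le Lam0_le_IX Lam1_le_IX) Lam2_le_IX

/-- `Λ = Λ₀ + Λ₁ + Λ₂` is contained in `I(X) = ker φ_W`. -/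
theorem candidate_le_fiber_ideal (K : Type*) [Field K] [CharZero K] (d : ℕ) (hd : 4 ≤ d) :
    Lam K d ≤ IX K d :=
  candidate_le_fiber_ideal_general K d
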